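/- arXiv:2010.07125 — 3 statements merged into one kernel-verified Lean document; each statement's English description precedes it below -/
import Mathlib

section
/- Suppose f is submodular with f(∅) ≥ 0, S = {e₁,…,e_l} is produced by a greedy procedure adding elements in order of maximal marginal gain per cost, C = {e'₁,…,e'_k} is disjoint from S, and at every greedy step each element of C was available but not chosen (so each greedy choice had at least as large a marginal-gain-to-cost ratio as any element of C). If the total cost of S strictly exceeds the total cost of C, then f(S) ≥ (1/2) · f(S ∪ C). -/
def Submodular {U : Type*} [DecidableEq U] (f : Finset U → ℝ) : Prop :=
  ∀ X Y : Finset U, X ⊆ Y → ∀ e ∉ Y, f (insert e Y) - f Y ≤ f (insert e X) - f X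

/-!
Let `A` be the sum over `C` of the marginal gains at the greedy output `S l`. Submodularity gives
`f (S l ∪ C) ≤ f (S l) + A`, and it also bounds `A` by each greedy step `i`: every element of `C`
gains at most as much at `S l` as at `S (i - 1)`, where its ratio is dominated by the greedy ratio,
so `A * c (e i) ≤ cost(C) * (f (S i) - f (S (i - 1)))`. Summing over the steps and using
`cost(C) < cost(S)` yields `A ≤ f (S l) - f ∅ ≤ f (S l)`.
-/

open Finset

namespace Submodular

variable {U : Type*} [DecidableEq U] {f : Finset U → ℝ}

theorem union_le_add_sum_marginal (hf : Submodular f) {A T : Finset U} (hTA : Disjoint T A) :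
    f (A ∪ T) ≤ f A + ∑ x ∈ T, (f (insert x A) - f A) := by
  induction T using Finset.induction generalizing A with
  | empty => simp
  | @insert a T haT ih =>
    obtain ⟨haA, hTA⟩ := disjoint_insert_left.mp hTA
    have hstep : f (insert a (A ∪ T)) - f (A ∪ T) ≤ f (insert a A) - f A :=
      hf A (A ∪ T) subset_union_left a (by simp [haA, haT])
    rw [union_insert, sum_insert haT]
    linarith [ih hTA]

theorem sum_marginal_le_mul_sum_cost (hf : Submodular f) {B S C : Finset U} (hBS : B ⊆ S)
    (hCS : Disjoint C S) (c : U → ℝ) {r : ℝ}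
    (hr : ∀ x ∈ C, f (insert x B) - f B ≤ r * c x) :
    ∑ x ∈ C, (f (insert x S) - f S) ≤ r * ∑ x ∈ C, c x := by
  rw [mul_sum]
  exact sum_le_sum fun x hx => (hf B S hBS x (disjoint_left.mp hCS hx)).trans (hr x hx)

end Submodular

theorem sum_Icc_sub_pred (g : ℕ → ℝ) (n : ℕ) :
    ∑ i ∈ Icc 1 n, (g i - g (i - 1)) = g n - g 0 := by
  induction n with
  | zero => simp
  | succ n ih => rw [sum_Icc_succ_top (by omega), ih, Nat.add_sub_cancel]; ring

theorem le_sum_of_forall_mul_le {ι : Type*} {s : Finset ι} {w d : ι → ℝ} {a K : ℝ}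
    (hK : 0 ≤ K) (hKw : K < ∑ i ∈ s, w i) (hd : 0 ≤ ∑ i ∈ s, d i)
    (h : ∀ i ∈ s, a * w i ≤ K * d i) :
    a ≤ ∑ i ∈ s, d i := by
  have hw : 0 < ∑ i ∈ s, w i := hK.trans_lt hKw
  refine le_of_mul_le_mul_left ?_ hw
  calc (∑ i ∈ s, w i) * a = ∑ i ∈ s, a * w i := by rw [sum_mul]; simp only [mul_comm]
    _ ≤ ∑ i ∈ s, K * d i := sum_le_sum h
    _ = K * ∑ i ∈ s, d i := (mul_sum ..).symm
    _ ≤ (∑ i ∈ s, w i) * ∑ i ∈ s, d i := by gcongr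

theorem stmt_2_general {U : Type*} [DecidableEq U] (f : Finset U → ℝ) (c : U → ℝ)
    (hsub : Submodular f) (hf0 : 0 ≤ f ∅) (hc : ∀ x, 0 < c x)
    (l k : ℕ) (e e' : ℕ → U)
    (S : ℕ → Finset U) (hS : ∀ i, S i = (Finset.Icc 1 i).image e)
    (C : Finset U) (hC : C = (Finset.Icc 1 k).image e')
    (hdisj : Disjoint C (S l))
    (hmono : ∀ i, 1 ≤ i → i ≤ l → 0 ≤ f (S i) - f (S (i - 1)))
    (havail : ∀ i j, 1 ≤ i → i ≤ l → 1 ≤ j → j ≤ k →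
      (f (S i) - f (S (i - 1))) / c (e i) ≥
        (f (S (i - 1) ∪ {e' j}) - f (S (i - 1))) / c (e' j))
    (hcost : (∑ i ∈ Finset.Icc 1 l, c (e i)) > ∑ j ∈ Finset.Icc 1 k, c (e' j)) :
    f (S l) ≥ (1 / 2) * f (S l ∪ C) := by
  set K := ∑ j ∈ Icc 1 k, c (e' j)
  set A := ∑ x ∈ C, (f (insert x (S l)) - f (S l))
  have hstep : ∀ i ∈ Icc 1 l, A * c (e i) ≤ K * (f (S i) - f (S (i - 1))) := by
    intro i hi
    obtain ⟨hi1, hil⟩ := mem_Icc.mp hi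
    set r := (f (S i) - f (S (i - 1))) / c (e i)
    have hratio : ∀ x ∈ C, f (insert x (S (i - 1))) - f (S (i - 1)) ≤ r * c x := by
      intro x hx
      obtain ⟨j, hj, rfl⟩ := mem_image.mp (hC ▸ hx)
      obtain ⟨hj1, hjk⟩ := mem_Icc.mp hj
      have := havail i j hi1 hil hj1 hjk
      rwa [union_singleton, ge_iff_le, div_le_iff₀ (hc _)] at this
    have hprefix : S (i - 1) ⊆ S l := by
      rw [hS, hS]; exact image_subset_image (Icc_subset_Icc le_rfl (by omega))
    have hCK : ∑ x ∈ C, c x ≤ K :=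
      hC ▸ sum_image_le_of_nonneg fun x _ => (hc x).le
    have hr : 0 ≤ r := div_nonneg (hmono i hi1 hil) (hc _).le
    calc A * c (e i) ≤ r * (∑ x ∈ C, c x) * c (e i) := by
          gcongr
          · exact (hc _).le
          · exact hsub.sum_marginal_le_mul_sum_cost hprefix hdisj c hratio
      _ ≤ r * K * c (e i) := by gcongr; exact (hc _).le
      _ = K * (f (S i) - f (S (i - 1))) := by simp only [r]; field_simp [(hc (e i)).ne']
  have htotal : A ≤ f (S l) - f ∅ := by
    have htel : ∑ i ∈ Icc 1 l, (f (S i) - f (S (i - 1))) = f (S l) - f ∅ := by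
      rw [sum_Icc_sub_pred (fun i => f (S i)), hS 0]; simp
    rw [← htel]
    exact le_sum_of_forall_mul_le (sum_nonneg fun j _ => (hc _).le) hcost
      (sum_nonneg fun i hi => hmono i (mem_Icc.mp hi).1 (mem_Icc.mp hi).2) hstep
  linarith [hsub.union_le_add_sum_marginal hdisj]

theorem stmt_2 {U : Type*} [DecidableEq U] (f : Finset U → ℝ) (c : U → ℝ)
    (hsub : Submodular f) (hf0 : 0 ≤ f ∅) (hc : ∀ x, 0 < c x)
    (l k : ℕ) (hl : 1 ≤ l) (hk : 1 ≤ k) (e e' : ℕ → U)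
    (S : ℕ → Finset U) (hS : ∀ i, S i = (Finset.Icc 1 i).image e)
    (C : Finset U) (hC : C = (Finset.Icc 1 k).image e')
    (hdisj : Disjoint C (S l))
    (hmono : ∀ i, 1 ≤ i → i ≤ l → 0 ≤ f (S i) - f (S (i - 1)))
    (havail : ∀ i j, 1 ≤ i → i ≤ l → 1 ≤ j → j ≤ k →
      (f (S i) - f (S (i - 1))) / c (e i) ≥
        (f (S (i - 1) ∪ {e' j}) - f (S (i - 1))) / c (e' j))
    (hcost : (∑ i ∈ Finset.Icc 1 l, c (e i)) > ∑ j ∈ Finset.Icc 1 k, c (e' j)) :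
    f (S l) ≥ (1 / 2) * f (S l ∪ C) :=
  stmt_2_general f c hsub hf0 hc l k e e' S hS C hC hdisj hmono havail hcost
end

section
/- Let f be a nonnegative submodular function with f(∅) ≥ 0 and let S̄ be a set with f(S̄) ≥ (1/6)·opt that violates the budget by exactly one element e. Let e_max maximize f over singletons, and let Ŝ be the better of S̄ \ {e} and {e_max}. Then f(Ŝ) ≥ (1/12)·opt. -/
theorem stmt_8 {U : Type*} [DecidableEq U] (f : Finset U → ℝ)
    (hsub : Submodular f) (hnonneg : ∀ A : Finset U, 0 ≤ f A)
    (hf0 : 0 ≤ f ∅) (opt : ℝ) (hopt : 0 ≤ opt)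
    (Sbar : Finset U) (e : U) (he : e ∈ Sbar)
    (hSbar : f Sbar ≥ (1 / 6) * opt)
    (emax : U) (hemax : ∀ x : U, f {x} ≤ f {emax}) :
    max (f (Sbar.erase e)) (f {emax}) ≥ (1 / 12) * opt := by
  have h := hsub ∅ (Sbar.erase e) (Finset.empty_subset _) e (Finset.notMem_erase e Sbar)
  rw [Finset.insert_erase he] at h
  rw [show insert e (∅ : Finset U) = {e} from rfl] at h
  have hsum : f (Sbar.erase e) + f {e} ≥ (1 / 6) * opt := by linarith
  have he' : f {e} ≤ f {emax} := hemax e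
  rcases le_total (f (Sbar.erase e)) (f {e}) with hc | hc
  · have : f {emax} ≥ (1 / 12) * opt := by linarith
    exact le_trans this (le_max_right _ _)
  · have : f (Sbar.erase e) ≥ (1 / 12) * opt := by linarith
    exact le_trans this (le_max_left _ _)
end

section
/- If the greedy procedure with marginal cost-performance ratio encounters a step where adding element e_i gives negative marginal gain, i.e., f(S[:i−1] ∪ {e_i}) − f(S[:i−1]) < 0, and for all j the greedy availability condition holds ((f(S[:i]) − f(S[:i−1]))/c(e_i) ≥ (f(S[:l] ∪ C[:j]) − f(S[:l] ∪ C[:j−1]))/c(e'_j)), then f(S[:l] ∪ C) ≤ f(S[:l]); hence f(S[:l]) ≥ (1/2)·(f(S[:l]) + f(S[:l] ∪ C)) ≥ (1/2)·f(S[:l] ∪ C) when f is nonnegative. -/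
theorem stmt_18 {U : Type*} [DecidableEq U] (f : Finset U → ℝ) (c : U → ℝ)
    (hsub : Submodular f) (hnonneg : ∀ A : Finset U, 0 ≤ f A)
    (hc : ∀ x, 0 < c x)
    (l k : ℕ) (hl : 1 ≤ l) (hk : 1 ≤ k) (e e' : ℕ → U)
    (S : ℕ → Finset U) (hS : ∀ i, S i = (Finset.Icc 1 i).image e)
    (C : ℕ → Finset U) (hCdef : ∀ j, C j = (Finset.Icc 1 j).image e')
    (hdisj : Disjoint (C k) (S l))
    (i : ℕ) (hi1 : 1 ≤ i) (hil : i ≤ l)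
    (hneg : f (S (i - 1) ∪ {e i}) - f (S (i - 1)) < 0)
    (havail : ∀ j, 1 ≤ j → j ≤ k →
      (f (S i) - f (S (i - 1))) / c (e i) ≥
        (f (S l ∪ C j) - f (S l ∪ C (j - 1))) / c (e' j)) :
    f (S l ∪ C k) ≤ f (S l) ∧ f (S l) ≥ (1 / 2) * f (S l ∪ C k) := by
  -- S i = S (i-1) ∪ {e i}
  have hSi : S i = S (i - 1) ∪ {e i} := by
    rw [hS, hS]
    have : Finset.Icc 1 i = insert i (Finset.Icc 1 (i - 1)) := by
      ext x
      simp only [Finset.mem_Icc, Finset.mem_insert]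
      omega
    rw [this, Finset.image_insert]
    ext x
    simp only [Finset.mem_insert, Finset.mem_union, Finset.mem_singleton]
    tauto
  have hnegS : f (S i) - f (S (i - 1)) < 0 := by rw [hSi]; exact hneg
  -- each telescoping term is ≤ 0
  have hterm : ∀ j, 1 ≤ j → j ≤ k → f (S l ∪ C j) - f (S l ∪ C (j - 1)) ≤ 0 := by
    intro j hj1 hjk
    have h := havail j hj1 hjk
    have hlt : (f (S i) - f (S (i - 1))) / c (e i) < 0 :=
      div_neg_of_neg_of_pos hnegS (hc _)
    have h2 : (f (S l ∪ C j) - f (S l ∪ C (j - 1))) / c (e' j) < 0 := lt_of_le_of_lt h hlt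
    rcases div_neg_iff.mp h2 with ⟨_, hneg'⟩ | ⟨hlt', _⟩
    · exact absurd (hc (e' j)) (not_lt.mpr hneg'.le)
    · exact hlt'.le
  -- C 0 = ∅
  have hC0 : S l ∪ C 0 = S l := by
    rw [hCdef]
    simp
  have hmain : ∀ j, j ≤ k → f (S l ∪ C j) ≤ f (S l) := by
    intro j
    induction j with
    | zero => intro _; rw [hC0]
    | succ n ih =>
      intro hjk
      have h1 := hterm (n + 1) (by omega) hjk
      have h2 := ih (by omega)
      simp only [Nat.add_sub_cancel] at h1
      linarith
  have h1 : f (S l ∪ C k) ≤ f (S l) := hmain k le_rfl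
  refine ⟨h1, ?_⟩
  have := hnonneg (S l ∪ C k)
  linarith
end
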